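/- Let A be an s×s real matrix and M a linear operator on Hilbert space H with ⟨Mu,u⟩ = 0 on D(M), and suppose A satisfies the coercivity condition with diagonal positive definite K = diag(k_i) and constant α > 0. If v, w ∈ D(M)^s satisfy w = v + τ (A ⊗ M) w, then ⟨w, (K A⁻¹ ⊗ Id) w⟩_{H^s} = ⟨w, (K A⁻¹ ⊗ Id) v⟩_{H^s}; consequently α·min_i(k_i)·‖w‖²_{H^s} ≤ ⟨w, (K A⁻¹ ⊗ Id) v⟩_{H^s} and ‖w‖_{H^s} ≤ C‖v‖_{H^s} for a constant C depending only on α, K and A⁻¹. -/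

import Mathlib

open Finset Matrix
open scoped InnerProductSpace

/-!
Applying `K A⁻¹ ⊗ Id` to the stage equation gives `(K A⁻¹ ⊗ Id)(w - v) = τ (K ⊗ M) w`, and
`⟨w, (K ⊗ M) w⟩ = Σᵢ kᵢ ⟨wᵢ, M wᵢ⟩ = 0` because `M` is skew. Coercivity of `K A⁻¹` on `ℝˢ`
passes to `Hˢ` because the Gram matrix of `w` factors as `Rᵀ R`, so that
`⟨w, (C ⊗ Id) w⟩ = Σₗ rₗᵀ C rₗ` over the rows `rₗ` of `R`. Cauchy–Schwarz bounds
`⟨w, (K A⁻¹ ⊗ Id) v⟩` by a multiple of `‖w‖ ‖v‖`, which turns the lower bound into `‖w‖ ≤ C ‖v‖`.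
-/

section MatrixAction

variable {ι H : Type*} [Fintype ι] [NormedAddCommGroup H] [InnerProductSpace ℝ H]

theorem sum_smul_sum_smul (B A : Matrix ι ι ℝ) (x : ι → H) (i : ι) :
    ∑ j, B i j • ∑ l, A j l • x l = ∑ l, (B * A) i l • x l := by
  simp only [smul_sum, smul_smul, mul_apply, sum_smul]
  exact sum_comm

theorem sum_diagonal_smul [DecidableEq ι] (k : ι → ℝ) (x : ι → H) (i : ι) :
    ∑ j, diagonal k i j • x j = k i • x i := by
  simp [diagonal_apply, ite_smul]

theorem sum_inner_sum_smul_eq_of_stage [DecidableEq ι] {A B : Matrix ι ι ℝ} {k : ι → ℝ}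
    (hBA : B * A = diagonal k) (M : H → H) (τ : ℝ) {v w : ι → H}
    (hMw : ∀ i, ⟪M (w i), w i⟫_ℝ = 0) (hvw : ∀ i, w i = v i + τ • ∑ j, A i j • M (w j)) :
    ∑ i, ⟪w i, ∑ j, B i j • w j⟫_ℝ = ∑ i, ⟪w i, ∑ j, B i j • v j⟫_ℝ := by
  have hstage (i : ι) : ∑ j, B i j • w j = ∑ j, B i j • v j + (τ * k i) • M (w i) := by
    calc ∑ j, B i j • w j = ∑ j, B i j • (v j + τ • ∑ l, A j l • M (w l)) :=
          sum_congr rfl fun j _ => by rw [← hvw j]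
      _ = _ := by
          rw [mul_smul, ← sum_diagonal_smul k (fun l => M (w l)), ← hBA, ← sum_smul_sum_smul,
            smul_sum]
          simp only [smul_add, sum_add_distrib, smul_comm τ]
  refine sum_congr rfl fun i _ => ?_
  rw [hstage, inner_add_right, real_inner_smul_right, real_inner_comm (M (w i)), hMw, mul_zero,
    add_zero]

theorem exists_gram_eq_transpose_mul_self (w : ι → H) :
    ∃ R : Matrix ι ι ℝ, gram ℝ w = Rᵀ * R := by
  classical
  open scoped Matrix.Norms.L2Operator MatrixOrder in
  exact CStarAlgebra.nonneg_iff_eq_star_mul_self.mp (posSemidef_gram ℝ w).nonneg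

theorem sum_inner_sum_smul_nonneg {C : Matrix ι ι ℝ} (hC : ∀ u, 0 ≤ u ⬝ᵥ C *ᵥ u)
    (w : ι → H) : 0 ≤ ∑ i, ⟪w i, ∑ j, C i j • w j⟫_ℝ := by
  obtain ⟨R, hR⟩ := exists_gram_eq_transpose_mul_self w
  have hinner (i j : ι) : ⟪w i, w j⟫_ℝ = ∑ l, R l i * R l j := by
    simpa [mul_apply] using congrFun₂ hR i j
  calc (0 : ℝ) ≤ ∑ l, R l ⬝ᵥ C *ᵥ R l := sum_nonneg fun l _ => hC (R l)
    _ = ∑ i, ⟪w i, ∑ j, C i j • w j⟫_ℝ := by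
      simp only [inner_sum, real_inner_smul_right, hinner, dotProduct, mulVec, mul_sum]
      rw [sum_comm]
      refine sum_congr rfl fun i _ => ?_
      rw [sum_comm]
      exact sum_congr rfl fun j _ => sum_congr rfl fun l _ => by ring

theorem sum_inner_sum_smul_mono {B C : Matrix ι ι ℝ} (hCB : ∀ u, u ⬝ᵥ C *ᵥ u ≤ u ⬝ᵥ B *ᵥ u)
    (w : ι → H) : ∑ i, ⟪w i, ∑ j, C i j • w j⟫_ℝ ≤ ∑ i, ⟪w i, ∑ j, B i j • w j⟫_ℝ := by
  have hnonneg := sum_inner_sum_smul_nonneg (C := B - C)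
    (fun u => by simpa [sub_mulVec, dotProduct_sub] using hCB u) w
  simp only [Matrix.sub_apply, sub_smul, sum_sub_distrib, inner_sub_right] at hnonneg
  linarith

theorem mul_inf'_mul_sum_norm_sq_le [DecidableEq ι] {B : Matrix ι ι ℝ} {k : ι → ℝ} {α : ℝ}
    (hα : 0 ≤ α) (hne : (univ : Finset ι).Nonempty)
    (hcoer : ∀ u, α * (u ⬝ᵥ diagonal k *ᵥ u) ≤ u ⬝ᵥ B *ᵥ u) (w : ι → H) :
    α * univ.inf' hne k * ∑ i, ‖w i‖ ^ 2 ≤ ∑ i, ⟪w i, ∑ j, B i j • w j⟫_ℝ :=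
  calc α * univ.inf' hne k * ∑ i, ‖w i‖ ^ 2 ≤ ∑ i, α * k i * ‖w i‖ ^ 2 := by
        rw [mul_sum]
        gcongr with i
        exact inf'_le _ (mem_univ i)
    _ = ∑ i, ⟪w i, ∑ j, diagonal (α • k) i j • w j⟫_ℝ := by
        simp only [sum_diagonal_smul, Pi.smul_apply, smul_eq_mul, real_inner_smul_right,
          real_inner_self_eq_norm_sq, mul_assoc]
    _ ≤ ∑ i, ⟪w i, ∑ j, B i j • w j⟫_ℝ :=
        sum_inner_sum_smul_mono (C := diagonal (α • k)) (fun u => by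
          simpa only [diagonal_smul, smul_mulVec, dotProduct_smul, smul_eq_mul] using hcoer u) w

theorem sum_inner_sum_smul_le (B : Matrix ι ι ℝ) (w u : ι → H) :
    ∑ i, ⟪w i, ∑ j, B i j • u j⟫_ℝ ≤
      (∑ i, ∑ j, |B i j|) * (√(∑ i, ‖w i‖ ^ 2) * √(∑ i, ‖u i‖ ^ 2)) := by
  have hle (x : ι → H) (i : ι) : ‖x i‖ ≤ √(∑ j, ‖x j‖ ^ 2) :=
    Real.le_sqrt_of_sq_le (single_le_sum (fun j _ => sq_nonneg ‖x j‖) (mem_univ i))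
  simp only [inner_sum, real_inner_smul_right, sum_mul]
  refine sum_le_sum fun i _ => sum_le_sum fun j _ => ?_
  calc B i j * ⟪w i, u j⟫_ℝ ≤ |B i j| * |⟪w i, u j⟫_ℝ| := by
        rw [← abs_mul]
        exact le_abs_self _
    _ ≤ |B i j| * (‖w i‖ * ‖u j‖) := by gcongr; exact abs_real_inner_le_norm _ _
    _ ≤ _ := by gcongr <;> apply hle

end MatrixAction

theorem le_div_mul_of_mul_sq_le {a b x y : ℝ} (ha : 0 < a) (hb : 0 ≤ b) (hx : 0 ≤ x)
    (hy : 0 ≤ y) (h : a * x ^ 2 ≤ b * (x * y)) : x ≤ b / a * y := by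
  rcases hx.eq_or_lt with rfl | hx
  · positivity
  · rw [div_mul_eq_mul_div, le_div_iff₀ ha]
    nlinarith

theorem RK_stage_coercivity_estimate_general
    {H : Type*} [NormedAddCommGroup H] [InnerProductSpace ℝ H]
    {s : ℕ} [NeZero s]
    (D : Submodule ℝ H) (M : H →ₗ[ℝ] H)
    (hM : ∀ u ∈ D, (inner ℝ (M u) u : ℝ) = 0)
    (A : Matrix (Fin s) (Fin s) ℝ) (hA : IsUnit A)
    (k : Fin s → ℝ) (hk : ∀ i, 0 < k i)
    (α : ℝ) (hα : 0 < α)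
    (hcoer : ∀ u : Fin s → ℝ,
      α * (u ⬝ᵥ (Matrix.diagonal k *ᵥ u)) ≤
        u ⬝ᵥ ((Matrix.diagonal k * A⁻¹) *ᵥ u))
    (τ : ℝ) :
    (∀ v w : Fin s → H, (∀ i, v i ∈ D) → (∀ i, w i ∈ D) →
      (∀ i, w i = v i + τ • ∑ j, A i j • M (w j)) →
      (∑ i, (inner ℝ (w i) (∑ j, (Matrix.diagonal k * A⁻¹) i j • w j) : ℝ)) =
          (∑ i, (inner ℝ (w i) (∑ j, (Matrix.diagonal k * A⁻¹) i j • v j) : ℝ)) ∧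
        α * (Finset.univ.inf' Finset.univ_nonempty k) * (∑ i, ‖w i‖ ^ 2) ≤
          (∑ i, (inner ℝ (w i) (∑ j, (Matrix.diagonal k * A⁻¹) i j • v j) : ℝ))) ∧
      ∃ C > 0, ∀ v w : Fin s → H, (∀ i, v i ∈ D) → (∀ i, w i ∈ D) →
        (∀ i, w i = v i + τ • ∑ j, A i j • M (w j)) →
        Real.sqrt (∑ i, ‖w i‖ ^ 2) ≤ C * Real.sqrt (∑ i, ‖v i‖ ^ 2) := by
  set B := diagonal k * A⁻¹
  have hBA : B * A = diagonal k := by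
    rw [Matrix.mul_assoc, nonsing_inv_mul A ((isUnit_iff_isUnit_det A).mp hA), Matrix.mul_one]
  have hstage (v w : Fin s → H) (hw : ∀ i, w i ∈ D)
      (hvw : ∀ i, w i = v i + τ • ∑ j, A i j • M (w j)) :
      ∑ i, ⟪w i, ∑ j, B i j • w j⟫_ℝ = ∑ i, ⟪w i, ∑ j, B i j • v j⟫_ℝ ∧
        α * univ.inf' univ_nonempty k * ∑ i, ‖w i‖ ^ 2 ≤ ∑ i, ⟪w i, ∑ j, B i j • v j⟫_ℝ := by
    have hidentity := sum_inner_sum_smul_eq_of_stage hBA M τ (fun i => hM _ (hw i)) hvw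
    exact ⟨hidentity, hidentity ▸ mul_inf'_mul_sum_norm_sq_le hα.le _ hcoer w⟩
  refine ⟨fun v w _ hw hvw => hstage v w hw hvw, ?_⟩
  have hm : 0 < univ.inf' univ_nonempty k := (lt_inf'_iff _).2 fun i _ => hk i
  set c := ∑ i, ∑ j, |B i j|
  refine ⟨(c + 1) / (α * univ.inf' univ_nonempty k), by positivity, fun v w _ hw hvw =>
    le_div_mul_of_mul_sq_le (by positivity) (by positivity) (Real.sqrt_nonneg _)
      (Real.sqrt_nonneg _) ?_⟩
  rw [Real.sq_sqrt (by positivity)]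
  calc _ ≤ _ := (hstage v w hw hvw).2
    _ ≤ c * _ := sum_inner_sum_smul_le B w v
    _ ≤ _ := by gcongr; linarith

/-- A priori estimate for the Runge–Kutta stage equation `w = v + τ (A ⊗ M) w`
under the coercivity condition `uᵀ K A⁻¹ u ≥ α uᵀ K u`:
`⟨w,(KA⁻¹⊗Id)w⟩ = ⟨w,(KA⁻¹⊗Id)v⟩`, hence
`α·(minᵢ kᵢ)·‖w‖² ≤ ⟨w,(KA⁻¹⊗Id)v⟩` and `‖w‖ ≤ C‖v‖`. -/
theorem RK_stage_coercivity_estimate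
    {H : Type*} [NormedAddCommGroup H] [InnerProductSpace ℝ H] [CompleteSpace H]
    {s : ℕ} [NeZero s]
    (D : Submodule ℝ H) (M : H →ₗ[ℝ] H)
    (hM : ∀ u ∈ D, (inner ℝ (M u) u : ℝ) = 0)
    (A : Matrix (Fin s) (Fin s) ℝ) (hA : IsUnit A)
    (k : Fin s → ℝ) (hk : ∀ i, 0 < k i)
    (α : ℝ) (hα : 0 < α)
    (hcoer : ∀ u : Fin s → ℝ,
      α * (u ⬝ᵥ (Matrix.diagonal k *ᵥ u)) ≤
        u ⬝ᵥ ((Matrix.diagonal k * A⁻¹) *ᵥ u))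
    (τ : ℝ) (hτ : 0 < τ) :
    (∀ v w : Fin s → H, (∀ i, v i ∈ D) → (∀ i, w i ∈ D) →
      (∀ i, w i = v i + τ • ∑ j, A i j • M (w j)) →
      (∑ i, (inner ℝ (w i) (∑ j, (Matrix.diagonal k * A⁻¹) i j • w j) : ℝ)) =
          (∑ i, (inner ℝ (w i) (∑ j, (Matrix.diagonal k * A⁻¹) i j • v j) : ℝ)) ∧
        α * (Finset.univ.inf' Finset.univ_nonempty k) * (∑ i, ‖w i‖ ^ 2) ≤
          (∑ i, (inner ℝ (w i) (∑ j, (Matrix.diagonal k * A⁻¹) i j • v j) : ℝ))) ∧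
      ∃ C > 0, ∀ v w : Fin s → H, (∀ i, v i ∈ D) → (∀ i, w i ∈ D) →
        (∀ i, w i = v i + τ • ∑ j, A i j • M (w j)) →
        Real.sqrt (∑ i, ‖w i‖ ^ 2) ≤ C * Real.sqrt (∑ i, ‖v i‖ ^ 2) :=
  RK_stage_coercivity_estimate_general D M hM A hA k hk α hα hcoer τ
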